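/- arXiv:2309.08847 — 2 statements merged into one kernel-verified Lean document; each statement's English description precedes it below -/
import Mathlib

section
/- Triangular transport characterizes conditionals: let X take values in a standard Borel space M and Y in ℝ^m, with joint law P_{XY} and marginals P_X, P_Y. If S(x,y) = (T(x,y), y) is a measurable map pushing the product measure P_X ⊗ P_Y forward to P_{XY}, then for P_Y-almost every y, the map x ↦ T(x, y) pushes P_X forward to the conditional distribution P_{X|Y}(·|y). -/
/-!
After swapping coordinates, `hpush` says that `ρ` seen on `(Fin m → ℝ) × M` is the
composition-product of `P_Y` with the kernel `y ↦ (T(·, y))_# P_X`, while `hκ` says it is the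
composition-product of `P_Y` with `κ`. Disintegrations of a finite measure into finite kernels
with countably generated target are unique `P_Y`-a.e.
-/

open MeasureTheory ProbabilityTheory

namespace ProbabilityTheory.Kernel

variable {α β γ : Type*} [MeasurableSpace α] [MeasurableSpace β] [MeasurableSpace γ]

noncomputable def mapSection (ν : Measure α) [SFinite ν] (f : β → α → γ) : Kernel β γ :=
  (deterministic id measurable_id ×ₖ const β ν).map (Function.uncurry f)

variable {ν : Measure α} [SFinite ν] {f : β → α → γ}

lemma mapSection_apply (hf : Measurable (Function.uncurry f)) (b : β) :
    mapSection ν f b = ν.map (f b) := by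
  rw [mapSection, map_apply _ hf, prod_apply, deterministic_apply, const_apply,
    Measure.dirac_prod, Measure.map_map hf measurable_prodMk_left]
  rfl

instance : IsSFiniteKernel (mapSection ν f) := by
  unfold mapSection; infer_instance

instance [IsFiniteMeasure ν] : IsFiniteKernel (mapSection ν f) := by
  unfold mapSection; infer_instance

lemma compProd_mapSection {μ : Measure β} [SFinite μ] (hf : Measurable (Function.uncurry f)) :
    μ ⊗ₘ mapSection ν f = (μ.prod ν).map (fun p => (p.1, f p.1 p.2)) := by
  have hg : Measurable fun p : β × α => (p.1, f p.1 p.2) := measurable_fst.prodMk hf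
  ext s hs
  rw [Measure.compProd_apply hs, Measure.map_apply hg hs, Measure.prod_apply (hg hs)]
  refine lintegral_congr fun b => ?_
  rw [mapSection_apply hf, Measure.map_apply hf.of_uncurry_left (measurable_prodMk_left hs)]
  rfl

end ProbabilityTheory.Kernel

lemma MeasureTheory.Measure.compProd_eq_map_swap {α β : Type*} [MeasurableSpace α]
    [MeasurableSpace β] {ρ : Measure (α × β)} {μ : Measure β} [IsFiniteMeasure μ]
    {κ : Kernel β α} [IsFiniteKernel κ]
    (h : ∀ (A : Set α) (B : Set β), MeasurableSet A → MeasurableSet B →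
      ρ (A ×ˢ B) = ∫⁻ y in B, κ y A ∂μ) :
    μ ⊗ₘ κ = ρ.map Prod.swap :=
  Measure.ext_prod fun hB hA => by
    rw [compProd_apply_prod hB hA, map_apply measurable_swap (hB.prod hA),
      Set.preimage_swap_prod, h _ _ hA hB]

theorem triangular_map_pushes_to_conditional_general
    {M : Type*} [MeasurableSpace M] [StandardBorelSpace M] {m : ℕ}
    (ρ : Measure (M × (Fin m → ℝ)))
    (PX : Measure M) (PY : Measure (Fin m → ℝ))
    [IsProbabilityMeasure PX] [IsProbabilityMeasure PY]
    (κ : Kernel (Fin m → ℝ) M) [IsMarkovKernel κ]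
    (hκ : ∀ (A : Set M) (B : Set (Fin m → ℝ)), MeasurableSet A → MeasurableSet B →
      ρ (A ×ˢ B) = ∫⁻ y in B, κ y A ∂PY)
    (T : M → (Fin m → ℝ) → M)
    (hS : Measurable (fun p : M × (Fin m → ℝ) => (T p.1 p.2, p.2)))
    (hpush : (PX.prod PY).map (fun p : M × (Fin m → ℝ) => (T p.1 p.2, p.2)) = ρ) :
    ∀ᵐ y ∂PY, PX.map (fun x => T x y) = κ y := by
  have hT : Measurable (Function.uncurry fun y x => T x y) :=
    (measurable_fst.comp hS).comp measurable_swap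
  have hS_swap : Measurable fun p : (Fin m → ℝ) × M => (p.1, T p.2 p.1) :=
    measurable_fst.prodMk hT
  have hη : PY ⊗ₘ Kernel.mapSection PX (fun y x => T x y) = ρ.map Prod.swap := by
    rw [Kernel.compProd_mapSection hT, ← hpush, ← Measure.prod_swap,
      Measure.map_map hS_swap measurable_swap, Measure.map_map measurable_swap hS]
    rfl
  filter_upwards [Kernel.ae_eq_of_compProd_eq
    ((Measure.compProd_eq_map_swap hκ).trans hη.symm)] with y hy
  rw [hy, Kernel.mapSection_apply hT]

/-- Triangular transport characterizes conditionals: if the block-triangular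
map `S(x,y) = (T(x,y), y)` pushes the independent coupling `P_X ⊗ P_Y` forward
to the joint law `P_{XY}`, then for `P_Y`-a.e. `y` the map `x ↦ T(x,y)` pushes
`P_X` forward to the regular conditional distribution `P_{X|Y}(·|y)` (given by
the kernel `κ`). -/
theorem triangular_map_pushes_to_conditional
    {M : Type*} [MeasurableSpace M] [StandardBorelSpace M] {m : ℕ}
    (ρ : Measure (M × (Fin m → ℝ))) [IsProbabilityMeasure ρ]
    (PX : Measure M) (PY : Measure (Fin m → ℝ))
    [IsProbabilityMeasure PX] [IsProbabilityMeasure PY]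
    (hPX : ρ.map Prod.fst = PX) (hPY : ρ.map Prod.snd = PY)
    (κ : Kernel (Fin m → ℝ) M) [IsMarkovKernel κ]
    (hκ : ∀ (A : Set M) (B : Set (Fin m → ℝ)), MeasurableSet A → MeasurableSet B →
      ρ (A ×ˢ B) = ∫⁻ y in B, κ y A ∂PY)
    (T : M → (Fin m → ℝ) → M)
    (hS : Measurable (fun p : M × (Fin m → ℝ) => (T p.1 p.2, p.2)))
    (hpush : (PX.prod PY).map (fun p : M × (Fin m → ℝ) => (T p.1 p.2, p.2)) = ρ) :
    ∀ᵐ y ∂PY, PX.map (fun x => T x y) = κ y :=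
  triangular_map_pushes_to_conditional_general ρ PX PY κ hκ T hS hpush
end

section
/- Conversely, if T : M × ℝ^m → M is measurable and for P_Y-almost every y the map T(·, y) pushes P_X forward to P_{X|Y}(·|y), then the block-triangular map S(x,y) = (T(x,y), y) pushes P_X ⊗ P_Y forward to the joint law P_{XY}. -/
/-!
The pushforward is a finite measure on a product, so it is determined by its values on
rectangles `A ×ˢ B`. Slicing the product along `y`, the triangular map sends mass
`(P_X.map (T · y)) A` over each `y ∈ B`, which is `κ y A` for `P_Y`-a.e. `y`; integrating over
`B` gives `ρ (A ×ˢ B)` by the disintegration identity.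
-/

open MeasureTheory ProbabilityTheory

namespace MeasureTheory.Measure

variable {α β γ : Type*} [MeasurableSpace α] [MeasurableSpace β] [MeasurableSpace γ]
  {T : α → β → γ}

lemma measurable_of_measurable_triangular (hS : Measurable fun p : α × β => (T p.1 p.2, p.2))
    (y : β) : Measurable fun x => T x y :=
  (measurable_fst.comp hS).comp measurable_prodMk_right

lemma map_triangular_apply_prod (μ : Measure α) (ν : Measure β) [SFinite μ] [SFinite ν]
    (hS : Measurable fun p : α × β => (T p.1 p.2, p.2))
    {A : Set γ} {B : Set β} (hA : MeasurableSet A) (hB : MeasurableSet B) :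
    (μ.prod ν).map (fun p : α × β => (T p.1 p.2, p.2)) (A ×ˢ B)
      = ∫⁻ y in B, μ.map (fun x => T x y) A ∂ν := by
  have slice : ∀ y, μ ((fun x => (x, y)) ⁻¹' ((fun p : α × β => (T p.1 p.2, p.2)) ⁻¹' (A ×ˢ B)))
      = B.indicator (fun y => μ.map (fun x => T x y) A) y := by
    intro y
    by_cases hy : y ∈ B
    · simp [hy, map_apply (measurable_of_measurable_triangular hS y) hA, Set.preimage]
    · simp [hy, Set.preimage]
  rw [map_apply hS (hA.prod hB), prod_apply_symm (hS (hA.prod hB)), lintegral_congr slice,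
    lintegral_indicator hB]

end MeasureTheory.Measure

theorem conditional_pushforward_implies_triangular_general
    {M : Type*} [MeasurableSpace M] {m : ℕ}
    (ρ : Measure (M × (Fin m → ℝ)))
    (PX : Measure M) (PY : Measure (Fin m → ℝ))
    [IsProbabilityMeasure PX] [IsProbabilityMeasure PY]
    (κ : Kernel (Fin m → ℝ) M)
    (hκ : ∀ (A : Set M) (B : Set (Fin m → ℝ)), MeasurableSet A → MeasurableSet B →
      ρ (A ×ˢ B) = ∫⁻ y in B, κ y A ∂PY)
    (T : M → (Fin m → ℝ) → M)
    (hS : Measurable (fun p : M × (Fin m → ℝ) => (T p.1 p.2, p.2)))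
    (hpush : ∀ᵐ y ∂PY, PX.map (fun x => T x y) = κ y) :
    (PX.prod PY).map (fun p : M × (Fin m → ℝ) => (T p.1 p.2, p.2)) = ρ := by
  refine Measure.ext_prod fun {A B} hA hB => ?_
  rw [Measure.map_triangular_apply_prod PX PY hS hA hB, hκ A B hA hB]
  refine setLIntegral_congr_fun_ae hB ?_
  filter_upwards [hpush] with y hy _
  rw [hy]

/-- Converse triangular transport: if for `P_Y`-a.e. `y` the map `T(·,y)`
pushes `P_X` forward to the regular conditional distribution `P_{X|Y}(·|y)`
(given by the kernel `κ`), then the block-triangular map `S(x,y) = (T(x,y), y)`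
pushes the product measure `P_X ⊗ P_Y` forward to the joint law `P_{XY}`. -/
theorem conditional_pushforward_implies_triangular
    {M : Type*} [MeasurableSpace M] [StandardBorelSpace M] {m : ℕ}
    (ρ : Measure (M × (Fin m → ℝ))) [IsProbabilityMeasure ρ]
    (PX : Measure M) (PY : Measure (Fin m → ℝ))
    [IsProbabilityMeasure PX] [IsProbabilityMeasure PY]
    (hPX : ρ.map Prod.fst = PX) (hPY : ρ.map Prod.snd = PY)
    (κ : Kernel (Fin m → ℝ) M) [IsMarkovKernel κ]
    (hκ : ∀ (A : Set M) (B : Set (Fin m → ℝ)), MeasurableSet A → MeasurableSet B →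
      ρ (A ×ˢ B) = ∫⁻ y in B, κ y A ∂PY)
    (T : M → (Fin m → ℝ) → M)
    (hS : Measurable (fun p : M × (Fin m → ℝ) => (T p.1 p.2, p.2)))
    (hpush : ∀ᵐ y ∂PY, PX.map (fun x => T x y) = κ y) :
    (PX.prod PY).map (fun p : M × (Fin m → ℝ) => (T p.1 p.2, p.2)) = ρ :=
  conditional_pushforward_implies_triangular_general ρ PX PY κ hκ T hS hpush
end
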